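/- For every real t, p and every y with 0 < y < Φ(t), there exists a unique real number a such that ∫_{-∞}^{t} Φ(a(s-t)+p)·φ(s) ds = y. -/

import Mathlib

/-! For `s < t` the integrand `Φ(a(s - t) + p) φ(s)` is strictly decreasing in `a`, tending to `φ(s)`
as `a → -∞` and to `0` as `a → ∞`. By dominated convergence (with dominating function `φ`) the
integral is therefore continuous and strictly decreasing in `a`, with limits `Φ(t)` and `0`, so it
takes every value in `(0, Φ(t))` exactly once. -/

open Real MeasureTheory Set Filter

noncomputable def phi (s : ℝ) : ℝ := Real.exp (-s ^ 2 / 2) / Real.sqrt (2 * Real.pi)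

noncomputable def Phi (t : ℝ) : ℝ := ∫ s in Set.Iic t, phi s

open Topology ProbabilityTheory

lemma phi_eq_gaussianPDFReal : phi = gaussianPDFReal 0 1 := by
  ext s
  simp [phi, gaussianPDFReal, div_eq_inv_mul]

lemma phi_pos (s : ℝ) : 0 < phi s := by
  unfold phi
  positivity

@[fun_prop]
lemma continuous_phi : Continuous phi := by
  unfold phi
  fun_prop

lemma integrable_phi : Integrable phi :=
  phi_eq_gaussianPDFReal ▸ integrable_gaussianPDFReal 0 1

lemma Phi_eq_cdf : Phi = cdf (gaussianReal 0 1) := by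
  ext x
  rw [cdf_eq_real, measureReal_def, gaussianReal_apply_eq_integral _ one_ne_zero,
    ENNReal.toReal_ofReal (setIntegral_nonneg measurableSet_Iic fun s _ =>
      gaussianPDFReal_nonneg 0 1 s), ← phi_eq_gaussianPDFReal]
  rfl

lemma Phi_sub_Phi (a b : ℝ) : Phi b - Phi a = ∫ s in a..b, phi s :=
  intervalIntegral.integral_Iic_sub_Iic integrable_phi.integrableOn integrable_phi.integrableOn

lemma strictMono_Phi : StrictMono Phi := fun a b hab => by
  have hpos : 0 < ∫ s in a..b, phi s :=
    intervalIntegral.intervalIntegral_pos_of_pos integrable_phi.intervalIntegrable phi_pos hab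
  linarith [Phi_sub_Phi a b]

@[fun_prop]
lemma continuous_Phi : Continuous Phi := by
  have hPhi : Phi = fun b => Phi 0 + ∫ s in (0 : ℝ)..b, phi s := by
    ext b
    linarith [Phi_sub_Phi 0 b]
  rw [hPhi]
  exact continuous_const.add (integrable_phi.continuous_primitive 0)

lemma Phi_nonneg (x : ℝ) : 0 ≤ Phi x := Phi_eq_cdf ▸ cdf_nonneg _ x

lemma Phi_le_one (x : ℝ) : Phi x ≤ 1 := Phi_eq_cdf ▸ cdf_le_one _ x

lemma norm_Phi_mul_phi_le (x s : ℝ) : ‖Phi x * phi s‖ ≤ phi s := by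
  rw [norm_mul, Real.norm_of_nonneg (Phi_nonneg x), Real.norm_of_nonneg (phi_pos s).le]
  exact mul_le_of_le_one_left (phi_pos s).le (Phi_le_one x)

lemma strictAnti_Phi_line {s t : ℝ} (hs : s < t) (p : ℝ) :
    StrictAnti fun a => Phi (a * (s - t) + p) := fun _ _ hab =>
  strictMono_Phi ((add_lt_add_iff_right p).2 (mul_lt_mul_of_neg_right hab (sub_neg.2 hs)))

/-- Taken over `Iio t` rather than `Iic t` (they differ by a null set) so that `s - t < 0` on the
domain. -/
noncomputable def slopeIntegral (t p a : ℝ) : ℝ := ∫ s in Iio t, Phi (a * (s - t) + p) * phi s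

namespace slopeIntegral

variable (t p : ℝ)

lemma integrableOn_integrand (a : ℝ) :
    IntegrableOn (fun s => Phi (a * (s - t) + p) * phi s) (Iio t) :=
  integrable_phi.integrableOn.mono' (by fun_prop : Continuous _).aestronglyMeasurable
    (ae_of_all _ fun s => norm_Phi_mul_phi_le _ s)

lemma continuous : Continuous (slopeIntegral t p) :=
  continuous_of_dominated (fun _ => (by fun_prop : Continuous _).aestronglyMeasurable)
    (fun _ => ae_of_all _ fun s => norm_Phi_mul_phi_le _ s) integrable_phi.integrableOn
    (ae_of_all _ fun _ => by fun_prop)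

lemma strictAnti : StrictAnti (slopeIntegral t p) := by
  intro a b hab
  rw [← sub_pos, slopeIntegral, slopeIntegral,
    ← integral_sub (integrableOn_integrand t p a) (integrableOn_integrand t p b)]
  have hpos : ∀ s ∈ Iio t, 0 < Phi (a * (s - t) + p) * phi s - Phi (b * (s - t) + p) * phi s :=
    fun s hs => sub_pos.2 (mul_lt_mul_of_pos_right (strictAnti_Phi_line hs p hab) (phi_pos s))
  have hsupp : Iio t ⊆ Function.support
      fun s => Phi (a * (s - t) + p) * phi s - Phi (b * (s - t) + p) * phi s :=
    fun s hs => (hpos s hs).ne'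
  rw [setIntegral_pos_iff_support_of_nonneg_ae
    (ae_restrict_of_forall_mem measurableSet_Iio fun s hs => (hpos s hs).le)
    ((integrableOn_integrand t p a).sub (integrableOn_integrand t p b)),
    inter_eq_right.2 hsupp, volume_Iio]
  exact ENNReal.zero_lt_top

lemma tendsto {l : Filter ℝ} [l.IsCountablyGenerated] {c : ℝ}
    (h : ∀ s < t, Tendsto (fun a => Phi (a * (s - t) + p)) l (𝓝 c)) :
    Tendsto (slopeIntegral t p) l (𝓝 (c * Phi t)) := by
  rw [Phi, ← setIntegral_congr_set Iio_ae_eq_Iic, ← integral_const_mul]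
  exact tendsto_integral_filter_of_dominated_convergence phi
    (.of_forall fun _ => (by fun_prop : Continuous _).aestronglyMeasurable)
    (.of_forall fun _ => ae_of_all _ fun s => norm_Phi_mul_phi_le _ s) integrable_phi.integrableOn
    (ae_restrict_of_forall_mem measurableSet_Iio fun s hs => (h s hs).mul_const (phi s))

lemma tendsto_atTop : Tendsto (slopeIntegral t p) atTop (𝓝 0) := by
  simpa using tendsto t p (c := 0) fun s hs => (Phi_eq_cdf ▸ tendsto_cdf_atBot _).comp
    (tendsto_atBot_add_const_right _ p (tendsto_id.atTop_mul_const_of_neg (sub_neg.2 hs)))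

lemma tendsto_atBot : Tendsto (slopeIntegral t p) atBot (𝓝 (Phi t)) := by
  simpa using tendsto t p (c := 1) fun s hs => (Phi_eq_cdf ▸ tendsto_cdf_atTop _).comp
    (tendsto_atTop_add_const_right _ p (tendsto_id.atBot_mul_const_of_neg (sub_neg.2 hs)))

end slopeIntegral

theorem stmt_6 (t p y : ℝ) (hy0 : 0 < y) (hy1 : y < Phi t) :
    ∃! a : ℝ, ∫ s in Set.Iic t, Phi (a * (s - t) + p) * phi s = y := by
  simp_rw [← setIntegral_congr_set Iio_ae_eq_Iic]
  obtain ⟨a, ha⟩ : y ∈ range (slopeIntegral t p) :=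
    mem_range_of_exists_le_of_exists_ge (slopeIntegral.continuous t p)
      ((slopeIntegral.tendsto_atTop t p).eventually_le_const hy0).exists
      ((slopeIntegral.tendsto_atBot t p).eventually_const_le hy1).exists
  exact ⟨a, ha, fun b hb => (slopeIntegral.strictAnti t p).injective (hb.trans ha.symm)⟩
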